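/- For every integer n ≥ 1, n! = Σ_{(T,v*) ∈ 𝒜*_n} 2^{m(T,v*)}, where m(T,v*) is the number of internal vertices of T that do not lie on the path from the root to the distinguished vertex, and the sum is over all pointed André trees on n vertices. -/

import Mathlib

/-!
Deleting the vertex labelled `1`, which is always a leaf, from an André tree on `k + 2`
vertices leaves an André tree on `k + 1` vertices pointed at the former parent `u` of that leaf
(`u` now has at most one child); conversely a new leaf labelled `1` can be grafted below any
vertex with at most one child. So André trees on `k + 2` vertices correspond to pointed André
trees on `k + 1` vertices.

Write `W(T) = ∑_{v*} 2^{m(T,v*)}` for the total weight of a tree. Grafting below a leaf `u`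
doubles `W`: `u` becomes internal and lies off the path to every `v* ≠ u`, while the new leaf
and `u` itself each contribute `2^{m(T,u)}`. Grafting below a vertex with one child keeps `W`,
the new leaf taking over the term of `u`, which now has two children. The factor is thus
`2 - #children(u)`, and summing it over all `u` gives `2(k + 1) - k = k + 2`, since the child
counts add up to the number of non-root vertices. Hence the total weight of André trees on
`n` vertices satisfies the recursion of `n!`.
-/

open scoped Classical

noncomputable section

/-- An André tree on `n` vertices, encoded by its parent map `p` on `Fin n`
(vertex `i` stands for label `i+1`): every non-root vertex points to a strictly
larger parent, the root (label `n`) is a fixed point by convention, and each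
vertex has at most two children. -/
def IsAndreTree (n : ℕ) (p : Fin n → Fin n) : Prop :=
  (∀ i : Fin n, (i : ℕ) + 1 < n → (i : ℕ) < (p i : ℕ)) ∧
  (∀ i : Fin n, ¬ (i : ℕ) + 1 < n → p i = i) ∧
  ∀ j : Fin n, (Finset.univ.filter fun i : Fin n => (i : ℕ) + 1 < n ∧ p i = j).card ≤ 2

/-- The set of André trees on `n` vertices. -/
def andreTrees (n : ℕ) : Finset (Fin n → Fin n) :=
  Finset.univ.filter (IsAndreTree n)

/-- The hook length of the vertex `v`: the number of vertices in the subtree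
rooted at `v`, i.e. the number of vertices `w` having `v` as an ancestor. -/
def hookA (n : ℕ) (p : Fin n → Fin n) (v : Fin n) : ℕ :=
  (Finset.univ.filter fun w : Fin n => ∃ k < n, p^[k] w = v).card

/-- The set of internal vertices, i.e. vertices with hook length `> 1`. -/
def internalsA (n : ℕ) (p : Fin n → Fin n) : Finset (Fin n) :=
  Finset.univ.filter fun v => 1 < hookA n p v

/-- The number of children of the vertex `v`. -/
def childCount (n : ℕ) (p : Fin n → Fin n) (v : Fin n) : ℕ :=
  (Finset.univ.filter fun i : Fin n => (i : ℕ) + 1 < n ∧ p i = v).card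

/-- The set of pointed André trees on `n` vertices: an André tree together with a
distinguished vertex having at most one child. -/
def pointedAndreTrees (n : ℕ) : Finset ((Fin n → Fin n) × Fin n) :=
  (andreTrees n ×ˢ Finset.univ).filter fun x => childCount n x.1 x.2 ≤ 1

/-- `v` lies on the path from the root to the distinguished vertex `vstar`
(endpoints included), i.e. `v` is an ancestor of `vstar` (or `vstar` itself). -/
def OnPath (n : ℕ) (p : Fin n → Fin n) (vstar v : Fin n) : Prop :=
  ∃ k < n, p^[k] vstar = v

end

open Finset Function

noncomputable section

def offPathInternalCount (n : ℕ) (p : Fin n → Fin n) (vstar : Fin n) : ℕ :=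
  #((internalsA n p).filter fun v => ¬ OnPath n p vstar v)

def pointWeight (n : ℕ) (p : Fin n → Fin n) (v : Fin n) : ℕ :=
  if childCount n p v ≤ 1 then 2 ^ offPathInternalCount n p v else 0

def treeWeight (n : ℕ) (p : Fin n → Fin n) : ℕ :=
  ∑ v, pointWeight n p v

end

lemma sum_pointedAndreTrees {n : ℕ} (g : (Fin n → Fin n) × Fin n → ℕ) :
    ∑ x ∈ pointedAndreTrees n, g x
      = ∑ p ∈ andreTrees n, ∑ v, if childCount n p v ≤ 1 then g (p, v) else 0 := by
  rw [pointedAndreTrees, sum_filter, sum_product]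

lemma sum_pointedAndreTrees_eq_sum_treeWeight (n : ℕ) :
    ∑ x ∈ pointedAndreTrees n, 2 ^ offPathInternalCount n x.1 x.2
      = ∑ p ∈ andreTrees n, treeWeight n p :=
  sum_pointedAndreTrees _

lemma mem_andreTrees {n : ℕ} {p : Fin n → Fin n} : p ∈ andreTrees n ↔ IsAndreTree n p := by
  simp [andreTrees]

lemma mem_pointedAndreTrees {n : ℕ} {x : (Fin n → Fin n) × Fin n} :
    x ∈ pointedAndreTrees n ↔ IsAndreTree n x.1 ∧ childCount n x.1 x.2 ≤ 1 := by
  simp [pointedAndreTrees, mem_andreTrees]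

section Tree

variable {n : ℕ} {p : Fin n → Fin n}

lemma onPath_refl (p : Fin n → Fin n) (v : Fin n) : OnPath n p v v :=
  ⟨0, v.pos, rfl⟩

lemma one_lt_hookA_iff {v : Fin n} : 1 < hookA n p v ↔ ∃ w ≠ v, OnPath n p w v := by
  have hv : v ∈ univ.filter fun w => ∃ k < n, p^[k] w = v :=
    mem_filter.mpr ⟨mem_univ _, onPath_refl p v⟩
  rw [hookA, one_lt_card]
  constructor
  · rintro ⟨a, ha, b, hb, hab⟩
    by_cases hav : a = v
    · exact ⟨b, fun hbv => hab (hav.trans hbv.symm), (mem_filter.mp hb).2⟩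
    · exact ⟨a, hav, (mem_filter.mp ha).2⟩
  · rintro ⟨w, hwv, hw⟩
    exact ⟨w, mem_filter.mpr ⟨mem_univ _, hw⟩, v, hv, hwv⟩

lemma childCount_pos_iff {v : Fin n} :
    0 < childCount n p v ↔ ∃ c : Fin n, (c : ℕ) + 1 < n ∧ p c = v := by
  simp [childCount, card_pos, Finset.Nonempty]

namespace IsAndreTree

variable (hp : IsAndreTree n p)
include hp

lemma childCount_pos_iff_exists_onPath (v : Fin n) :
    0 < childCount n p v ↔ ∃ w ≠ v, OnPath n p w v := by
  rw [childCount_pos_iff]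
  constructor
  · rintro ⟨c, hc, rfl⟩
    exact ⟨c, (hp.1 c hc).ne ∘ congrArg Fin.val, 1, by omega, rfl⟩
  · rintro ⟨w, hwv, j, -, hj⟩
    induction j with
    | zero => exact absurd hj hwv
    | succ j ih =>
      rw [iterate_succ_apply'] at hj
      by_cases hroot : ((p^[j] w : Fin n) : ℕ) + 1 < n
      · exact ⟨_, hroot, hj⟩
      · exact ih (by rwa [hp.2.1 _ hroot] at hj)

lemma mem_internalsA_iff (v : Fin n) : v ∈ internalsA n p ↔ 0 < childCount n p v := by
  simp only [internalsA, mem_filter, mem_univ, true_and, one_lt_hookA_iff,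
    hp.childCount_pos_iff_exists_onPath]

lemma eq_of_onPath_of_childCount_eq_zero {v w : Fin n} (hv : childCount n p v = 0)
    (h : OnPath n p w v) : w = v := by
  by_contra hwv
  have := (hp.childCount_pos_iff_exists_onPath v).mpr ⟨w, hwv, h⟩
  omega

lemma childCount_le_two (v : Fin n) : childCount n p v ≤ 2 :=
  hp.2.2 v

lemma isFixedPt_iterate_or_add_le (w : Fin n) (j : ℕ) :
    IsFixedPt p (p^[j] w) ∨ (w : ℕ) + j ≤ p^[j] w := by
  induction j with
  | zero => simp
  | succ j ih =>
    rw [iterate_succ_apply']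
    rcases ih with h | h
    · exact .inl h.apply
    · by_cases hroot : ((p^[j] w : Fin n) : ℕ) + 1 < n
      · have := hp.1 _ hroot
        omega
      · exact .inl (IsFixedPt.apply (hp.2.1 _ hroot))

lemma onPath_iff_exists_iterate {v w : Fin n} : OnPath n p w v ↔ ∃ j, p^[j] w = v := by
  refine ⟨fun ⟨j, _, hj⟩ => ⟨j, hj⟩, fun ⟨j, hj⟩ => ?_⟩
  by_cases hjn : j < n
  · exact ⟨j, hjn, hj⟩
  · have hfix : IsFixedPt p (p^[n - 1] w) := by
      rcases hp.isFixedPt_iterate_or_add_le w (n - 1) with h | h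
      · exact h
      · exact hp.2.1 _ (by omega)
    refine ⟨n - 1, by omega, ?_⟩
    rw [← hj, show j = (j - (n - 1)) + (n - 1) by omega, iterate_add_apply,
      iterate_fixed hfix]

end IsAndreTree

lemma sum_childCount (p : Fin n → Fin n) : ∑ v, childCount n p v = n - 1 := by
  have hval : ∀ i : Fin n, (i : ℕ) + 1 < n ↔ (i : ℕ) < n - 1 := fun i => by omega
  have h := card_eq_sum_card_fiberwise (f := p) (t := univ)
    (s := univ.filter fun i : Fin n => (i : ℕ) + 1 < n) (by simp)
  simp only [filter_filter, hval, Fin.card_filter_val_lt] at h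
  simp only [childCount, hval, ← h]
  omega

lemma IsAndreTree.sum_two_sub_childCount (hp : IsAndreTree n p) (hn : 0 < n) :
    ∑ v, (2 - childCount n p v) = n + 1 := by
  have hsum := sum_childCount p
  have htotal : ∑ v, ((2 - childCount n p v) + childCount n p v) = 2 * n := by
    rw [sum_congr rfl fun v _ => Nat.sub_add_cancel (hp.childCount_le_two v)]
    simp [mul_comm]
  rw [sum_add_distrib] at htotal
  omega

end Tree

section Graft

variable {k : ℕ} {q : Fin (k + 1) → Fin (k + 1)} {u : Fin (k + 1)}

def graftLeaf (q : Fin (k + 1) → Fin (k + 1)) (u : Fin (k + 1)) : Fin (k + 2) → Fin (k + 2) :=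
  Fin.cases u.succ fun i => (q i).succ

@[simp] lemma graftLeaf_zero (q : Fin (k + 1) → Fin (k + 1)) (u : Fin (k + 1)) :
    graftLeaf q u 0 = u.succ := rfl

@[simp] lemma graftLeaf_succ (q : Fin (k + 1) → Fin (k + 1)) (u i : Fin (k + 1)) :
    graftLeaf q u i.succ = (q i).succ := rfl

lemma iterate_graftLeaf_succ (q : Fin (k + 1) → Fin (k + 1)) (u w : Fin (k + 1)) (j : ℕ) :
    (graftLeaf q u)^[j] w.succ = (q^[j] w).succ := by
  induction j generalizing w with
  | zero => rfl
  | succ j ih => rw [iterate_succ_apply, graftLeaf_succ, ih, iterate_succ_apply]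

lemma iterate_succ_graftLeaf_zero (q : Fin (k + 1) → Fin (k + 1)) (u : Fin (k + 1)) (j : ℕ) :
    (graftLeaf q u)^[j + 1] 0 = (q^[j] u).succ := by
  rw [iterate_succ_apply, graftLeaf_zero, iterate_graftLeaf_succ]

lemma childCount_graftLeaf_zero (q : Fin (k + 1) → Fin (k + 1)) (u : Fin (k + 1)) :
    childCount (k + 2) (graftLeaf q u) 0 = 0 := by
  simp [childCount, Fin.forall_fin_succ, Fin.succ_ne_zero]

lemma childCount_graftLeaf_succ (q : Fin (k + 1) → Fin (k + 1)) (u v : Fin (k + 1)) :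
    childCount (k + 2) (graftLeaf q u) v.succ
      = childCount (k + 1) q v + if u = v then 1 else 0 := by
  rw [childCount, childCount, card_filter, card_filter, Fin.sum_univ_succ, add_comm]
  simp [Fin.succ_inj]

lemma isAndreTree_graftLeaf_iff :
    IsAndreTree (k + 2) (graftLeaf q u)
      ↔ IsAndreTree (k + 1) q ∧ childCount (k + 1) q u ≤ 1 := by
  have hlt : (∀ i : Fin (k + 2), (i : ℕ) + 1 < k + 2 → (i : ℕ) < graftLeaf q u i)
      ↔ ∀ i : Fin (k + 1), (i : ℕ) + 1 < k + 1 → (i : ℕ) < q i := by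
    simp [Fin.forall_fin_succ]
  have hroot : (∀ i : Fin (k + 2), ¬ (i : ℕ) + 1 < k + 2 → graftLeaf q u i = i)
      ↔ ∀ i : Fin (k + 1), ¬ (i : ℕ) + 1 < k + 1 → q i = i := by
    simp [Fin.forall_fin_succ, Fin.succ_inj]
  have hcc : (∀ v, childCount (k + 2) (graftLeaf q u) v ≤ 2)
      ↔ (∀ v, childCount (k + 1) q v ≤ 2) ∧ childCount (k + 1) q u ≤ 1 := by
    rw [Fin.forall_fin_succ]
    simp only [childCount_graftLeaf_zero, childCount_graftLeaf_succ]
    refine ⟨fun h => ⟨fun v => le_trans (Nat.le_add_right _ _) (h.2 v), by simpa using h.2 u⟩,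
      fun ⟨h2, h1⟩ => ⟨by omega, fun v => ?_⟩⟩
    split_ifs with huv
    · subst huv; omega
    · simpa using h2 v
  change (_ ∧ _ ∧ ∀ v, childCount _ _ v ≤ 2)
    ↔ (_ ∧ _ ∧ ∀ v, childCount _ _ v ≤ 2) ∧ _
  rw [hlt, hroot, hcc]
  tauto

variable (hq : IsAndreTree (k + 1) q)
include hq

lemma onPath_graftLeaf_succ_succ (w v : Fin (k + 1)) :
    OnPath (k + 2) (graftLeaf q u) w.succ v.succ ↔ OnPath (k + 1) q w v := by
  constructor
  · rintro ⟨j, -, hj⟩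
    exact hq.onPath_iff_exists_iterate.mpr
      ⟨j, Fin.succ_injective _ ((iterate_graftLeaf_succ q u w j).symm.trans hj)⟩
  · rintro ⟨j, hj, rfl⟩
    exact ⟨j, by omega, iterate_graftLeaf_succ q u w j⟩

lemma onPath_graftLeaf_zero_succ (v : Fin (k + 1)) :
    OnPath (k + 2) (graftLeaf q u) 0 v.succ ↔ OnPath (k + 1) q u v := by
  constructor
  · rintro ⟨_ | j, -, hj⟩
    · exact absurd hj (Fin.succ_ne_zero v).symm
    · exact hq.onPath_iff_exists_iterate.mpr
        ⟨j, Fin.succ_injective _ ((iterate_succ_graftLeaf_zero q u j).symm.trans hj)⟩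
  · rintro ⟨j, hj, rfl⟩
    exact ⟨j + 1, by omega, iterate_succ_graftLeaf_zero q u j⟩

lemma internalsA_graftLeaf (hu : childCount (k + 1) q u ≤ 1) :
    internalsA (k + 2) (graftLeaf q u)
      = (insert u (internalsA (k + 1) q)).map (Fin.succEmb _) := by
  have hp := isAndreTree_graftLeaf_iff.mpr ⟨hq, hu⟩
  ext v
  cases v using Fin.cases with
  | zero => simp [hp.mem_internalsA_iff, childCount_graftLeaf_zero, (Fin.succ_ne_zero u).symm]
  | succ v =>
    rw [← Fin.coe_succEmb, mem_map', mem_insert, hp.mem_internalsA_iff, Fin.coe_succEmb,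
      childCount_graftLeaf_succ, hq.mem_internalsA_iff]
    split_ifs <;> grind

lemma offPathInternalCount_graftLeaf (hu : childCount (k + 1) q u ≤ 1) (x : Fin (k + 2)) :
    offPathInternalCount (k + 2) (graftLeaf q u) x
      = #((insert u (internalsA (k + 1) q)).filter
          fun v => ¬ OnPath (k + 2) (graftLeaf q u) x v.succ) := by
  rw [offPathInternalCount, internalsA_graftLeaf hq hu, filter_map, card_map]
  rfl

lemma offPathInternalCount_graftLeaf_zero (hu : childCount (k + 1) q u ≤ 1) :
    offPathInternalCount (k + 2) (graftLeaf q u) 0 = offPathInternalCount (k + 1) q u := by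
  simp only [offPathInternalCount_graftLeaf hq hu, onPath_graftLeaf_zero_succ hq,
    filter_insert, onPath_refl, not_true, if_false]
  rfl

lemma offPathInternalCount_graftLeaf_succ_of_childCount_eq_one
    (hu : childCount (k + 1) q u = 1) (w : Fin (k + 1)) :
    offPathInternalCount (k + 2) (graftLeaf q u) w.succ = offPathInternalCount (k + 1) q w := by
  rw [offPathInternalCount_graftLeaf hq hu.le,
    insert_eq_of_mem ((hq.mem_internalsA_iff u).mpr (by omega))]
  simp only [onPath_graftLeaf_succ_succ hq]
  rfl

lemma offPathInternalCount_graftLeaf_succ_of_childCount_eq_zero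
    (hu : childCount (k + 1) q u = 0) (w : Fin (k + 1)) :
    offPathInternalCount (k + 2) (graftLeaf q u) w.succ
      = offPathInternalCount (k + 1) q w + if w = u then 0 else 1 := by
  have hnotmem : u ∉ internalsA (k + 1) q := by simp [hq.mem_internalsA_iff, hu]
  have hpath : OnPath (k + 1) q w u ↔ w = u :=
    ⟨hq.eq_of_onPath_of_childCount_eq_zero hu, fun h => h ▸ onPath_refl q u⟩
  rw [offPathInternalCount_graftLeaf hq (by omega)]
  simp only [onPath_graftLeaf_succ_succ hq, filter_insert, hpath]
  by_cases hwu : w = u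
  · simp only [hwu, not_true, if_false]
    rfl
  · simp only [hwu, not_false_eq_true, if_true]
    rw [card_insert_of_notMem fun h => hnotmem (mem_filter.mp h).1]
    rfl

lemma pointWeight_graftLeaf_zero (hu : childCount (k + 1) q u ≤ 1) :
    pointWeight (k + 2) (graftLeaf q u) 0 = pointWeight (k + 1) q u := by
  rw [pointWeight, pointWeight, childCount_graftLeaf_zero,
    offPathInternalCount_graftLeaf_zero hq hu, if_pos zero_le_one, if_pos hu]

lemma pointWeight_graftLeaf_succ_add (hu : childCount (k + 1) q u ≤ 1) (w : Fin (k + 1)) :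
    pointWeight (k + 2) (graftLeaf q u) w.succ + (if w = u then pointWeight (k + 1) q u else 0)
      = (2 - childCount (k + 1) q u) * pointWeight (k + 1) q w := by
  obtain hleaf | hone : childCount (k + 1) q u = 0 ∨ childCount (k + 1) q u = 1 := by omega
  · rw [pointWeight, childCount_graftLeaf_succ,
      offPathInternalCount_graftLeaf_succ_of_childCount_eq_zero hq hleaf, hleaf]
    by_cases hwu : w = u
    · subst hwu
      simp [pointWeight, hleaf]
      ring
    · simp [pointWeight, hwu, Ne.symm hwu, pow_succ']
  · rw [pointWeight, childCount_graftLeaf_succ,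
      offPathInternalCount_graftLeaf_succ_of_childCount_eq_one hq hone, hone]
    by_cases hwu : w = u
    · subst hwu
      simp [pointWeight, hone]
    · simp [pointWeight, hwu, Ne.symm hwu]

lemma treeWeight_graftLeaf (hu : childCount (k + 1) q u ≤ 1) :
    treeWeight (k + 2) (graftLeaf q u)
      = (2 - childCount (k + 1) q u) * treeWeight (k + 1) q := by
  have h := sum_congr rfl fun w (_ : w ∈ univ) => pointWeight_graftLeaf_succ_add hq hu w
  rw [sum_add_distrib, sum_ite_eq', if_pos (mem_univ _), ← mul_sum] at h
  rw [treeWeight, Fin.sum_univ_succ, pointWeight_graftLeaf_zero hq hu, treeWeight, ← h,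
    add_comm]

end Graft

section Prune

variable {k : ℕ}

/-- `Fin.predAbove 0` is the predecessor map, truncated at `0`. -/
def pruneLeaf (p : Fin (k + 2) → Fin (k + 2)) (i : Fin (k + 1)) : Fin (k + 1) :=
  (0 : Fin (k + 1)).predAbove (p i.succ)

lemma pruneLeaf_graftLeaf (q : Fin (k + 1) → Fin (k + 1)) (u : Fin (k + 1)) :
    pruneLeaf (graftLeaf q u) = q :=
  funext fun _ => Fin.predAbove_zero_succ

lemma IsAndreTree.apply_ne_zero {p : Fin (k + 2) → Fin (k + 2)} (hp : IsAndreTree (k + 2) p)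
    (i : Fin (k + 2)) : p i ≠ 0 := by
  intro hi
  by_cases hroot : (i : ℕ) + 1 < k + 2
  · have := hp.1 i hroot
    simp [hi] at this
  · have hi0 : i = 0 := (hp.2.1 i hroot).symm.trans hi
    simp [hi0] at hroot

lemma IsAndreTree.graftLeaf_pruneLeaf {p : Fin (k + 2) → Fin (k + 2)}
    (hp : IsAndreTree (k + 2) p) :
    graftLeaf (pruneLeaf p) ((0 : Fin (k + 1)).predAbove (p 0)) = p := by
  funext i
  cases i using Fin.cases <;> exact Fin.succ_predAbove_zero (hp.apply_ne_zero _)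

lemma sum_andreTrees_succ_eq_sum_graftLeaf (f : (Fin (k + 2) → Fin (k + 2)) → ℕ) :
    ∑ p ∈ andreTrees (k + 2), f p
      = ∑ x ∈ pointedAndreTrees (k + 1), f (graftLeaf x.1 x.2) := by
  symm
  refine sum_nbij' (fun x => graftLeaf x.1 x.2)
    (fun p => (pruneLeaf p, (0 : Fin (k + 1)).predAbove (p 0))) ?_ ?_ ?_ ?_ fun _ _ => rfl
  · rintro ⟨q, u⟩ hx
    exact mem_andreTrees.mpr (isAndreTree_graftLeaf_iff.mpr (mem_pointedAndreTrees.mp hx))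
  · intro p hp
    rw [mem_andreTrees, ← hp.graftLeaf_pruneLeaf] at hp
    exact mem_pointedAndreTrees.mpr (isAndreTree_graftLeaf_iff.mp hp)
  · rintro ⟨q, u⟩ -
    simp [pruneLeaf_graftLeaf]
  · intro p hp
    exact (mem_andreTrees.mp hp).graftLeaf_pruneLeaf

end Prune

lemma sum_treeWeight_succ (k : ℕ) :
    ∑ p ∈ andreTrees (k + 2), treeWeight (k + 2) p
      = (k + 2) * ∑ q ∈ andreTrees (k + 1), treeWeight (k + 1) q := by
  rw [sum_andreTrees_succ_eq_sum_graftLeaf, mul_sum]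
  calc ∑ x ∈ pointedAndreTrees (k + 1), treeWeight (k + 2) (graftLeaf x.1 x.2)
      = ∑ x ∈ pointedAndreTrees (k + 1),
          (2 - childCount (k + 1) x.1 x.2) * treeWeight (k + 1) x.1 :=
        sum_congr rfl fun x hx =>
          treeWeight_graftLeaf (mem_pointedAndreTrees.mp hx).1 (mem_pointedAndreTrees.mp hx).2
    _ = ∑ q ∈ andreTrees (k + 1), (k + 2) * treeWeight (k + 1) q := by
        rw [sum_pointedAndreTrees]
        refine sum_congr rfl fun q hq => ?_
        rw [show k + 2 = k + 1 + 1 from rfl,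
          ← (mem_andreTrees.mp hq).sum_two_sub_childCount k.succ_pos, sum_mul]
        refine sum_congr rfl fun v _ => ?_
        split_ifs with hv
        · rfl
        · rw [Nat.sub_eq_zero_of_le (by omega), zero_mul]

lemma sum_treeWeight_one : ∑ p ∈ andreTrees 1, treeWeight 1 p = 1 := by
  have hcc (p : Fin 1 → Fin 1) (v : Fin 1) : childCount 1 p v = 0 := by simp [childCount]
  have hid : IsAndreTree 1 id :=
    ⟨fun i hi => by omega, fun i _ => rfl, fun v => (hcc id v).trans_le (by norm_num)⟩
  have hall : andreTrees 1 = {id} :=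
    eq_singleton_iff_unique_mem.mpr ⟨mem_andreTrees.mpr hid, fun p _ => Subsingleton.elim _ _⟩
  have hint : internalsA 1 id = ∅ :=
    eq_empty_of_forall_notMem fun v hv => by simpa [hcc] using (hid.mem_internalsA_iff v).mp hv
  simp [hall, treeWeight, pointWeight, offPathInternalCount, hcc, hint]

/-- `n! = Σ_{(T,v*) ∈ 𝒜*_n} 2^{m(T,v*)}`, where `m(T,v*)` is the number of internal
vertices of `T` not lying on the path from the root to the distinguished vertex,
the sum being over all pointed André trees on `n` vertices. -/
theorem stmt11 (n : ℕ) (hn : 1 ≤ n) :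
    n.factorial
      = ∑ x ∈ pointedAndreTrees n,
          2 ^ ((internalsA n x.1).filter fun v => ¬ OnPath n x.1 x.2 v).card := by
  obtain ⟨m, rfl⟩ := Nat.exists_eq_add_of_le' hn
  change _ = ∑ x ∈ pointedAndreTrees (m + 1), 2 ^ offPathInternalCount (m + 1) x.1 x.2
  rw [sum_pointedAndreTrees_eq_sum_treeWeight]
  clear hn
  induction m with
  | zero => exact sum_treeWeight_one.symm
  | succ k ih => rw [sum_treeWeight_succ, ← ih, Nat.factorial_succ]
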